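/- In the SAT construction for 3-literal clause c_j = (l_t, l_s, l_r) with three pairs of adjacent clause-agents having preferences (c_j, d) & (l_t, c_j), (c_j, d) & (l_s, c_j), (c_j, d) & (l_r, c_j): under every voting order candidate c_j receives at least 3 votes from these six clause-agents, and exactly 3 + (number of pairs in which the second agent votes c_j) votes from them; in each pair, the second agent (with preferences (l, c_j)) votes l if she votes before her partner, and votes c_j if she votes after her partner (since her partner always votes c_j when voting first). -/

import Mathlib

open scoped Classical
open Finset

/-- The set of neighbors of `x` (w.r.t. adjacency `adj`) that vote before `x`
in the voting order `ord` (smaller `ord`-value votes earlier). -/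
noncomputable def prior {V : Type*} [Fintype V] (adj : V → V → Prop) (ord : V → ℕ) (x : V) :
    Finset V :=
  Finset.univ.filter fun y => adj x y ∧ ord y < ord x

/-- Refined social poll model: `f` is the (unique) vote function arising from the
voting order `ord`: an agent `x` votes `c ∈ P x` if strictly more than half of her
previously-voting neighbors voted `c`, and otherwise votes her top choice `p1 x`. -/
def Consistent {V C : Type*} [Fintype V] (adj : V → V → Prop)
    (P : V → Finset C) (p1 : V → C) (ord : V → ℕ) (f : V → C) : Prop :=
  ∀ x : V,
    (∃ c ∈ P x,
        (2 * (((prior adj ord x).filter fun y => f y = c).card) > (prior adj ord x).card)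
        ∧ f x = c)
    ∨ ((¬ ∃ c ∈ P x,
          2 * (((prior adj ord x).filter fun y => f y = c).card) > (prior adj ord x).card)
        ∧ f x = p1 x)

/-- The score of candidate `c`: the number of agents voting for `c`. -/
noncomputable def score {V C : Type*} [Fintype V] (f : V → C) (c : C) : ℕ :=
  (Finset.univ.filter fun x => f x = c).card

/-- Six clause-agents for a 3-literal clause: three isolated edges (pairs), pair `p`
consisting of agent `(p,0)` with preferences `(c_j, d)` and agent `(p,1)` with
preferences `(l_p, c_j)`. -/
def adj19 (x y : Fin 3 × Fin 2) : Prop := x.1 = y.1 ∧ x.2 ≠ y.2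

noncomputable def P19 {C : Type*} (cj d : C) (l : Fin 3 → C) (x : Fin 3 × Fin 2) : Finset C :=
  if x.2 = 0 then {cj, d} else {l x.1, cj}

def p119 {C : Type*} (cj d : C) (l : Fin 3 → C) (x : Fin 3 × Fin 2) : C :=
  if x.2 = 0 then cj else l x.1

/-!
In each pair the agent `(p, 0)` votes `c_j`: if she votes first her prior set is empty, and if
she votes second her partner has voted `l_p ∉ {c_j, d}`, so she again falls back to her top
choice. The partner then votes `l_p` when voting first and copies `c_j ∈ {l_p, c_j}` when voting
second, and counting votes pair by pair gives the score.
-/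

namespace Consistent

variable {V C : Type*} [Fintype V] {adj : V → V → Prop} {P : V → Finset C} {p1 : V → C}
  {ord : V → ℕ} {f : V → C}

theorem apply_eq_of_prior_eq_empty (hf : Consistent adj P p1 ord f) {x : V}
    (hx : prior adj ord x = ∅) : f x = p1 x := by
  rcases hf x with ⟨c, -, hgt, -⟩ | ⟨-, h⟩
  · simp [hx] at hgt
  · exact h

theorem apply_eq_of_prior_eq_singleton (hf : Consistent adj P p1 ord f) {x y : V}
    (hx : prior adj ord x = {y}) : f x = if f y ∈ P x then f y else p1 x := by
  have majority (c : C) :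
      2 * ((prior adj ord x).filter fun z => f z = c).card > (prior adj ord x).card ↔
        f y = c := by
    rw [hx, filter_singleton]
    split_ifs with h <;> simp [h]
  rcases hf x with ⟨c, hc, hgt, h⟩ | ⟨hno, h⟩
  · rw [majority] at hgt
    subst hgt
    rw [if_pos hc, h]
  · simp only [majority] at hno
    rw [if_neg fun hy => hno ⟨f y, hy, rfl⟩, h]

end Consistent

theorem prior_adj19 (ord : Fin 3 × Fin 2 → ℕ) (p : Fin 3) {i j : Fin 2} (hij : i ≠ j) :
    prior adj19 ord (p, i) = if ord (p, j) < ord (p, i) then {(p, j)} else ∅ := by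
  have partner (y : Fin 3 × Fin 2) : adj19 (p, i) y ↔ y = (p, j) := by
    obtain ⟨q, k⟩ := y
    simp only [adj19, Prod.mk.injEq]
    fin_cases i <;> fin_cases j <;> fin_cases k <;> simp_all [eq_comm]
  ext y
  simp only [prior, mem_filter, mem_univ, true_and, partner]
  split_ifs with h <;> aesop

theorem score_eq_card_add_of_forall_fst {ι C : Type*} [Fintype ι] {f : ι × Fin 2 → C} {c : C}
    (hf : ∀ p, f (p, 0) = c) :
    score f c = Fintype.card ι + (univ.filter fun p : ι => f (p, 1) = c).card := by
  rw [score, card_filter, card_filter, Fintype.sum_prod_type]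
  simp only [Fin.sum_univ_two, hf, if_true, sum_add_distrib, sum_const, card_univ, smul_eq_mul,
    mul_one]

section ClausePair

variable {C : Type*} {cj d : C} {l : Fin 3 → C} {ord : Fin 3 × Fin 2 → ℕ}
  {f : Fin 3 × Fin 2 → C}

theorem second_vote_of_votes_first (hf : Consistent adj19 (P19 cj d l) (p119 cj d l) ord f)
    {p : Fin 3} (h : ord (p, 1) < ord (p, 0)) : f (p, 1) = l p := by
  have hprior : prior adj19 ord (p, 1) = ∅ := by
    rw [prior_adj19 ord p (j := 0) (by decide), if_neg h.asymm]
  simpa [p119] using hf.apply_eq_of_prior_eq_empty hprior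

theorem first_vote_eq (hf : Consistent adj19 (P19 cj d l) (p119 cj d l) ord f)
    {p : Fin 3} (hl : l p ≠ cj ∧ l p ≠ d) : f (p, 0) = cj := by
  by_cases h : ord (p, 1) < ord (p, 0)
  · have hprior : prior adj19 ord (p, 0) = {(p, 1)} := by
      rw [prior_adj19 ord p (j := 1) (by decide), if_pos h]
    have := hf.apply_eq_of_prior_eq_singleton hprior
    simpa [second_vote_of_votes_first hf h, P19, p119, hl.1, hl.2] using this
  · have hprior : prior adj19 ord (p, 0) = ∅ := by
      rw [prior_adj19 ord p (j := 1) (by decide), if_neg h]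
    simpa [p119] using hf.apply_eq_of_prior_eq_empty hprior

theorem second_vote_of_votes_second (hf : Consistent adj19 (P19 cj d l) (p119 cj d l) ord f)
    {p : Fin 3} (hl : l p ≠ cj ∧ l p ≠ d) (h : ord (p, 0) < ord (p, 1)) : f (p, 1) = cj := by
  have hprior : prior adj19 ord (p, 1) = {(p, 0)} := by
    rw [prior_adj19 ord p (j := 0) (by decide), if_pos h]
  have := hf.apply_eq_of_prior_eq_singleton hprior
  simpa [first_vote_eq hf hl, P19] using this

end ClausePair

theorem clause_agents_votes_general
    {C : Type*} (cj d : C) (l : Fin 3 → C)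
    (hl : ∀ p, l p ≠ cj ∧ l p ≠ d)
    (ord : Fin 3 × Fin 2 → ℕ)
    (f : Fin 3 × Fin 2 → C)
    (hf : Consistent adj19 (P19 cj d l) (p119 cj d l) ord f) :
    3 ≤ score f cj ∧
    score f cj = 3 + (Finset.univ.filter fun p : Fin 3 => f (p, 1) = cj).card ∧
    ∀ p : Fin 3,
      (ord (p, 1) < ord (p, 0) → f (p, 1) = l p) ∧
      (ord (p, 0) < ord (p, 1) → f (p, 1) = cj) := by
  have hscore := score_eq_card_add_of_forall_fst fun p => first_vote_eq hf (hl p)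
  rw [Fintype.card_fin] at hscore
  exact ⟨hscore ▸ Nat.le_add_right _ _, hscore,
    fun p => ⟨second_vote_of_votes_first hf, second_vote_of_votes_second hf (hl p)⟩⟩

/-- For a 3-literal clause's six clause-agents: under every voting order `c_j` receives
at least 3 of their votes, and exactly `3 +` the number of pairs whose second agent
votes `c_j`; in each pair, the second agent votes `l_p` if she votes before her
partner, and votes `c_j` if she votes after her partner (the partner always votes
`c_j` when voting first). -/
theorem clause_agents_votes
    {C : Type*} (cj d : C) (l : Fin 3 → C)
    (hcd : cj ≠ d) (hl : ∀ p, l p ≠ cj ∧ l p ≠ d)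
    (ord : Fin 3 × Fin 2 → ℕ) (hord : Function.Injective ord)
    (f : Fin 3 × Fin 2 → C)
    (hf : Consistent adj19 (P19 cj d l) (p119 cj d l) ord f) :
    3 ≤ score f cj ∧
    score f cj = 3 + (Finset.univ.filter fun p : Fin 3 => f (p, 1) = cj).card ∧
    ∀ p : Fin 3,
      (ord (p, 1) < ord (p, 0) → f (p, 1) = l p) ∧
      (ord (p, 0) < ord (p, 1) → f (p, 1) = cj) :=
  clause_agents_votes_general cj d l hl ord f hf
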